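/- arXiv:2305.19685 — 3 statements merged into one kernel-verified Lean document; each statement's English description precedes it below -/
import Mathlib

section
/- Suppose that at every (x,t) ∈ ℝ^d × ℝ the pair (S, ρ) satisfies (i) −ħ ∂_t S = −(ħ²/(2m)) ( ½ Δ log ρ + ¼ ‖∇ log ρ‖² − ‖∇S‖² ) + V and (ii) (ħ/2) ∂_t log ρ = −(ħ²/(2m)) ( ΔS + ⟨∇ log ρ, ∇S⟩ ). Define the current velocity v := (ħ/m) ∇S and the osmotic velocity u := (ħ/(2m)) ∇ log ρ. Then at every (x,t) ∈ ℝ^d × ℝ: ∂_t v = −(1/m) ∇V + ⟨u, ∇⟩u − ⟨v, ∇⟩v + (ħ/(2m)) ∇⟨∇, u⟩ and ∂_t u = −∇⟨v, u⟩ − (ħ/(2m)) ∇⟨∇, v⟩. -/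
noncomputable section

/-- Spatial partial derivative in the `j`-th coordinate direction. -/
def pdx {d : ℕ} {E : Type*} [NormedAddCommGroup E] [NormedSpace ℝ E]
    (j : Fin d) (f : (Fin d → ℝ) → E) (x : Fin d → ℝ) : E :=
  fderiv ℝ f x (Pi.single j 1)

/-- The current velocity `v = (ℏ/m) ∇S` (the `i`-th component). -/
def cvel {d : ℕ} (ℏ m : ℝ) (S : (Fin d → ℝ) → ℝ → ℝ)
    (x : Fin d → ℝ) (t : ℝ) (i : Fin d) : ℝ :=
  (ℏ / m) * pdx i (fun y => S y t) x

/-- The osmotic velocity `u = (ℏ/(2m)) ∇ log ρ` (the `i`-th component). -/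
def ovel {d : ℕ} (ℏ m : ℝ) (ρ : (Fin d → ℝ) → ℝ → ℝ)
    (x : Fin d → ℝ) (t : ℝ) (i : Fin d) : ℝ :=
  (ℏ / (2 * m)) * pdx i (fun y => Real.log (ρ y t)) x

/-
Both velocities are gradient fields, `v = (ℏ/m) ∇S` and `u = (ℏ/(2m)) ∇log ρ`, so their
Jacobians are symmetric, `⟨w, ∇⟩w = ∇(½‖w‖²)` for `w = u, v`, and `∂ₜ` commutes with `∇`.
Multiplied by `-1/m`, equation (i) becomes the Bernoulli-type identity
`(ℏ/m) ∂ₜS = ½‖u‖² - ½‖v‖² + (ℏ/(2m)) ⟨∇, u⟩ - V/m`, and multiplied by `1/m`, equation (ii) becomes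
`(ℏ/(2m)) ∂ₜ log ρ = -⟨v, u⟩ - (ℏ/(2m)) ⟨∇, v⟩`. Taking `∇` of these two scalar identities
gives the equations for `∂ₜv` and `∂ₜu`.
-/

open scoped ContDiff

theorem fderiv_fderiv_apply_comm {E F : Type*} [NormedAddCommGroup E] [NormedSpace ℝ E]
    [NormedAddCommGroup F] [NormedSpace ℝ F] {G : E → F} {p : E} (hG : ContDiffAt ℝ 2 G p)
    (v w : E) :
    fderiv ℝ (fun q => fderiv ℝ G q v) p w = fderiv ℝ (fun q => fderiv ℝ G q w) p v := by
  have hG' : DifferentiableAt ℝ (fderiv ℝ G) p :=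
    (hG.fderiv_right (m := 1) le_rfl).differentiableAt one_ne_zero
  rw [fderiv_clm_apply hG' (differentiableAt_const v),
    fderiv_clm_apply hG' (differentiableAt_const w)]
  simpa using (hG.isSymmSndFDerivAt (by simp)).eq w v

section PartialDerivatives

variable {d : ℕ} {f g : (Fin d → ℝ) → ℝ} {x : Fin d → ℝ}

theorem pdx_add (hf : DifferentiableAt ℝ f x) (hg : DifferentiableAt ℝ g x) (j : Fin d) :
    pdx j (fun y => f y + g y) x = pdx j f x + pdx j g x := by
  simp [pdx, fderiv_fun_add hf hg]

theorem pdx_sub (hf : DifferentiableAt ℝ f x) (hg : DifferentiableAt ℝ g x) (j : Fin d) :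
    pdx j (fun y => f y - g y) x = pdx j f x - pdx j g x := by
  simp [pdx, fderiv_fun_sub hf hg]

theorem pdx_sum {ι : Type*} {s : Finset ι} {F : ι → (Fin d → ℝ) → ℝ}
    (hF : ∀ k ∈ s, DifferentiableAt ℝ (F k) x) (j : Fin d) :
    pdx j (fun y => ∑ k ∈ s, F k y) x = ∑ k ∈ s, pdx j (F k) x := by
  simp [pdx, fderiv_fun_sum hF]

theorem pdx_neg (f : (Fin d → ℝ) → ℝ) (j : Fin d) : pdx j (fun y => -f y) x = -pdx j f x := by
  simp [pdx]

theorem pdx_const_mul (c : ℝ) (f : (Fin d → ℝ) → ℝ) (j : Fin d) :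
    pdx j (fun y => c * f y) x = c * pdx j f x := by
  simp [pdx, ← smul_eq_mul, ← Pi.smul_def, fderiv_const_smul_field]

theorem pdx_sq (hf : DifferentiableAt ℝ f x) (j : Fin d) :
    pdx j (fun y => f y ^ 2) x = 2 * f x * pdx j f x := by
  simp [pdx, fderiv_fun_pow 2 hf]

@[fun_prop]
theorem contDiff_pdx (hf : ContDiff ℝ ∞ f) (j : Fin d) : ContDiff ℝ ∞ fun y => pdx j f y :=
  (hf.fderiv_right (m := ∞) (by simp)).clm_apply contDiff_const

theorem pdx_comm (hf : ContDiffAt ℝ 2 f x) (i j : Fin d) :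
    pdx i (pdx j f) x = pdx j (pdx i f) x :=
  fderiv_fderiv_apply_comm hf _ _

end PartialDerivatives

section SpaceTime

variable {d : ℕ} {n : WithTop ℕ∞} {φ : (Fin d → ℝ) → ℝ → ℝ}

theorem ContDiff.uncurry_right (t : ℝ) (hφ : ContDiff ℝ n (Function.uncurry φ)) :
    ContDiff ℝ n fun y => φ y t :=
  hφ.comp (contDiff_id.prodMk contDiff_const)

theorem pdx_comp_prodMk {G : (Fin d → ℝ) × ℝ → ℝ} {x : Fin d → ℝ} {t : ℝ}
    (hG : DifferentiableAt ℝ G (x, t)) (i : Fin d) :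
    pdx i (fun y => G (y, t)) x = fderiv ℝ G (x, t) (Pi.single i 1, 0) := by
  have h : HasFDerivAt (fun y => G (y, t)) ((fderiv ℝ G (x, t)).comp (.inl ℝ _ ℝ)) x :=
    hG.hasFDerivAt.comp x (hasFDerivAt_prodMk_left x t)
  simp [pdx, h.fderiv]

theorem deriv_comp_prodMk {E : Type*} [NormedAddCommGroup E] [NormedSpace ℝ E]
    {G : E × ℝ → ℝ} {x : E} {t : ℝ} (hG : DifferentiableAt ℝ G (x, t)) :
    deriv (fun s => G (x, s)) t = fderiv ℝ G (x, t) (0, 1) := by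
  have h : HasFDerivAt (fun s => G (x, s)) ((fderiv ℝ G (x, t)).comp (.inr ℝ E ℝ)) t :=
    hG.hasFDerivAt.comp t (hasFDerivAt_prodMk_right x t)
  simp [h.hasDerivAt.deriv]

theorem deriv_pdx_comm (hφ : ContDiff ℝ 2 (Function.uncurry φ)) (x : Fin d → ℝ) (t : ℝ)
    (i : Fin d) :
    deriv (fun s => pdx i (fun y => φ y s) x) t = pdx i (fun y => deriv (fun s => φ y s) t) x := by
  set G := Function.uncurry φ
  have hG : Differentiable ℝ G := hφ.differentiable two_ne_zero
  have hG' (v) : Differentiable ℝ fun p => fderiv ℝ G p v :=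
    ((hφ.fderiv_right (m := 1) le_rfl).clm_apply contDiff_const).differentiable one_ne_zero
  calc deriv (fun s => pdx i (fun y => φ y s) x) t
      = deriv (fun s => fderiv ℝ G (x, s) (Pi.single i 1, 0)) t := by
        congr 1; funext s; exact pdx_comp_prodMk (hG _) i
    _ = fderiv ℝ (fun p => fderiv ℝ G p (Pi.single i 1, 0)) (x, t) (0, 1) :=
        deriv_comp_prodMk (hG' _ _)
    _ = fderiv ℝ (fun p => fderiv ℝ G p (0, 1)) (x, t) (Pi.single i 1, 0) :=
        fderiv_fderiv_apply_comm hφ.contDiffAt _ _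
    _ = pdx i (fun y => fderiv ℝ G (y, t) (0, 1)) x := (pdx_comp_prodMk (hG' _ _) i).symm
    _ = pdx i (fun y => deriv (fun s => φ y s) t) x := by
        congr 1; funext y; exact (deriv_comp_prodMk (hG _)).symm

end SpaceTime

section GradientFields

variable {d : ℕ} {φ : (Fin d → ℝ) → ℝ → ℝ} {t : ℝ}

def gradField (c : ℝ) (φ : (Fin d → ℝ) → ℝ → ℝ) (x : Fin d → ℝ) (t : ℝ) (i : Fin d) : ℝ :=
  c * pdx i (fun y => φ y t) x

theorem cvel_eq_gradField (ℏ m : ℝ) (S : (Fin d → ℝ) → ℝ → ℝ) :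
    cvel ℏ m S = gradField (ℏ / m) S :=
  rfl

theorem ovel_eq_gradField (ℏ m : ℝ) (ρ : (Fin d → ℝ) → ℝ → ℝ) :
    ovel ℏ m ρ = gradField (ℏ / (2 * m)) fun y s => Real.log (ρ y s) :=
  rfl

@[fun_prop]
theorem contDiff_gradField (hφ : ContDiff ℝ ∞ fun y => φ y t) (c : ℝ) (i : Fin d) :
    ContDiff ℝ ∞ fun y => gradField c φ y t i := by
  unfold gradField; fun_prop

theorem deriv_gradField (hφ : ContDiff ℝ 2 (Function.uncurry φ)) (c : ℝ) (x : Fin d → ℝ)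
    (i : Fin d) :
    deriv (fun s => gradField c φ x s i) t = pdx i (fun y => c * deriv (fun s => φ y s) t) x := by
  simp only [gradField, deriv_const_mul_field, pdx_const_mul, deriv_pdx_comm hφ]

theorem pdx_gradField_comm {x : Fin d → ℝ} (hφ : ContDiffAt ℝ 2 (fun y => φ y t) x) (c : ℝ)
    (i j : Fin d) :
    pdx j (fun y => gradField c φ y t i) x = pdx i (fun y => gradField c φ y t j) x := by
  simp only [gradField, pdx_const_mul, pdx_comm hφ j i]

theorem sum_gradField_mul_pdx_gradField {x : Fin d → ℝ} (hφ : ContDiffAt ℝ 2 (fun y => φ y t) x)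
    (c : ℝ) (i : Fin d) :
    ∑ j, gradField c φ x t j * pdx j (fun y => gradField c φ y t i) x
      = pdx i (fun y => (1 / 2) * ∑ j, gradField c φ y t j ^ 2) x := by
  have hw (j : Fin d) : DifferentiableAt ℝ (fun y => gradField c φ y t j) x :=
    (contDiffAt_const.mul ((hφ.fderiv_right (m := 1) le_rfl).clm_apply contDiffAt_const))
      |>.differentiableAt one_ne_zero
  rw [pdx_const_mul, pdx_sum fun j _ => (hw j).fun_pow 2, Finset.mul_sum]
  refine Finset.sum_congr rfl fun j _ => ?_
  rw [pdx_sq (hw j), pdx_gradField_comm hφ]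
  ring

end GradientFields

section VelocityEquations

variable {d : ℕ} {ℏ m : ℝ} {ρ S V : (Fin d → ℝ) → ℝ → ℝ} {t : ℝ}

theorem deriv_cvel_of_hamiltonJacobi
    (hL : ContDiff ℝ ∞ (Function.uncurry fun y s => Real.log (ρ y s)))
    (hS : ContDiff ℝ ∞ (Function.uncurry S)) (hV : ContDiff ℝ ∞ (Function.uncurry V))
    (hHJ : ∀ y, (ℏ / m) * deriv (fun s => S y s) t
      = (1 / 2) * ∑ j, ovel ℏ m ρ y t j ^ 2 - (1 / 2) * ∑ j, cvel ℏ m S y t j ^ 2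
        + (ℏ / (2 * m)) * ∑ j, pdx j (fun z => ovel ℏ m ρ z t j) y - (1 / m) * V y t)
    (x : Fin d → ℝ) (i : Fin d) :
    deriv (fun s => cvel ℏ m S x s i) t
      = -(1 / m) * pdx i (fun y => V y t) x
        + (∑ j : Fin d, ovel ℏ m ρ x t j * pdx j (fun y => ovel ℏ m ρ y t i) x)
        - (∑ j : Fin d, cvel ℏ m S x t j * pdx j (fun y => cvel ℏ m S y t i) x)
        + (ℏ / (2 * m)) * pdx i (fun y => ∑ j : Fin d, pdx j (fun z => ovel ℏ m ρ z t j) y) x := by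
  have hLt := hL.uncurry_right t
  have hSt := hS.uncurry_right t
  have hVt := hV.uncurry_right t
  rw [cvel_eq_gradField, ovel_eq_gradField] at hHJ ⊢
  rw [deriv_gradField (hS.of_le ENat.LEInfty.out), funext hHJ,
    sum_gradField_mul_pdx_gradField (hLt.contDiffAt.of_le ENat.LEInfty.out),
    sum_gradField_mul_pdx_gradField (hSt.contDiffAt.of_le ENat.LEInfty.out)]
  simp (disch := (apply Differentiable.differentiableAt; fun_prop (disch := simp))) only
    [pdx_add, pdx_sub, pdx_const_mul]
  ring

theorem deriv_ovel_of_continuity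
    (hL : ContDiff ℝ ∞ (Function.uncurry fun y s => Real.log (ρ y s)))
    (hS : ContDiff ℝ ∞ (Function.uncurry S))
    (hCont : ∀ y, (ℏ / (2 * m)) * deriv (fun s => Real.log (ρ y s)) t
      = -∑ j, cvel ℏ m S y t j * ovel ℏ m ρ y t j
        - (ℏ / (2 * m)) * ∑ j, pdx j (fun z => cvel ℏ m S z t j) y)
    (x : Fin d → ℝ) (i : Fin d) :
    deriv (fun s => ovel ℏ m ρ x s i) t
      = -(pdx i (fun y => ∑ j : Fin d, cvel ℏ m S y t j * ovel ℏ m ρ y t j) x)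
        - (ℏ / (2 * m)) * pdx i (fun y => ∑ j : Fin d, pdx j (fun z => cvel ℏ m S z t j) y) x := by
  have hLt := hL.uncurry_right t
  have hSt := hS.uncurry_right t
  rw [cvel_eq_gradField, ovel_eq_gradField] at hCont ⊢
  rw [deriv_gradField (hL.of_le ENat.LEInfty.out), funext hCont]
  simp (disch := (apply Differentiable.differentiableAt; fun_prop (disch := simp))) only
    [pdx_sub, pdx_neg, pdx_const_mul]

end VelocityEquations

theorem coupled_system_implies_stochastic_mechanics_general
    (d : ℕ) (ℏ m : ℝ)
    (ρ S V : (Fin d → ℝ) → ℝ → ℝ)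
    (hρ : ContDiff ℝ (⊤ : ℕ∞) (Function.uncurry ρ))
    (hρpos : ∀ x t, 0 < ρ x t)
    (hS : ContDiff ℝ (⊤ : ℕ∞) (Function.uncurry S))
    (hV : ContDiff ℝ (⊤ : ℕ∞) (Function.uncurry V))
    (hsys1 : ∀ (x : Fin d → ℝ) (t : ℝ),
      -ℏ * deriv (fun s => S x s) t
        = -(ℏ ^ 2 / (2 * m))
            * ((1 / 2) * (∑ j : Fin d,
                  pdx j (fun y => pdx j (fun z => Real.log (ρ z t)) y) x)
              + (1 / 4) * (∑ j : Fin d, (pdx j (fun y => Real.log (ρ y t)) x) ^ 2)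
              - (∑ j : Fin d, (pdx j (fun y => S y t) x) ^ 2))
          + V x t)
    (hsys2 : ∀ (x : Fin d → ℝ) (t : ℝ),
      (ℏ / 2) * deriv (fun s => Real.log (ρ x s)) t
        = -(ℏ ^ 2 / (2 * m))
            * ((∑ j : Fin d, pdx j (fun y => pdx j (fun z => S z t) y) x)
              + (∑ j : Fin d,
                  pdx j (fun y => Real.log (ρ y t)) x * pdx j (fun y => S y t) x))) :
    ∀ (x : Fin d → ℝ) (t : ℝ) (i : Fin d),
      (deriv (fun s => cvel ℏ m S x s i) t
          = -(1 / m) * pdx i (fun y => V y t) x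
            + (∑ j : Fin d, ovel ℏ m ρ x t j * pdx j (fun y => ovel ℏ m ρ y t i) x)
            - (∑ j : Fin d, cvel ℏ m S x t j * pdx j (fun y => cvel ℏ m S y t i) x)
            + (ℏ / (2 * m))
                * pdx i (fun y => ∑ j : Fin d, pdx j (fun z => ovel ℏ m ρ z t j) y) x)
      ∧ (deriv (fun s => ovel ℏ m ρ x s i) t
          = -(pdx i (fun y => ∑ j : Fin d, cvel ℏ m S y t j * ovel ℏ m ρ y t j) x)
            - (ℏ / (2 * m))
                * pdx i (fun y => ∑ j : Fin d, pdx j (fun z => cvel ℏ m S z t j) y) x) := by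
  intro x t i
  have hL : ContDiff ℝ ∞ (Function.uncurry fun y s => Real.log (ρ y s)) :=
    hρ.log fun p => (hρpos p.1 p.2).ne'
  refine ⟨deriv_cvel_of_hamiltonJacobi hL hS hV (fun y => ?_) x i,
    deriv_ovel_of_continuity hL hS (fun y => ?_) x i⟩
  · simp only [ovel, cvel, pdx_const_mul, mul_pow, ← Finset.mul_sum]
    linear_combination (-1 / m) * hsys1 y t
  · simp only [ovel, cvel, pdx_const_mul, mul_mul_mul_comm (ℏ / m),
      mul_comm (pdx _ (fun y => S y t) y), ← Finset.mul_sum]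
    linear_combination (1 / m) * hsys2 y t

/-- If `(S, ρ)` satisfies the coupled real system, then the current
velocity `v = (ℏ/m) ∇S` and the osmotic velocity `u = (ℏ/(2m)) ∇ log ρ` satisfy the
stochastic-mechanics equations
`∂ₜv = −(1/m)∇V + ⟨u,∇⟩u − ⟨v,∇⟩v + (ℏ/(2m))∇⟨∇,u⟩` and
`∂ₜu = −∇⟨v,u⟩ − (ℏ/(2m))∇⟨∇,v⟩`. -/
theorem coupled_system_implies_stochastic_mechanics
    (d : ℕ) (hd : 1 ≤ d) (ℏ m : ℝ) (hℏ : 0 < ℏ) (hm : 0 < m)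
    (ρ S V : (Fin d → ℝ) → ℝ → ℝ)
    (hρ : ContDiff ℝ (⊤ : ℕ∞) (Function.uncurry ρ))
    (hρpos : ∀ x t, 0 < ρ x t)
    (hS : ContDiff ℝ (⊤ : ℕ∞) (Function.uncurry S))
    (hV : ContDiff ℝ (⊤ : ℕ∞) (Function.uncurry V))
    (hsys1 : ∀ (x : Fin d → ℝ) (t : ℝ),
      -ℏ * deriv (fun s => S x s) t
        = -(ℏ ^ 2 / (2 * m))
            * ((1 / 2) * (∑ j : Fin d,
                  pdx j (fun y => pdx j (fun z => Real.log (ρ z t)) y) x)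
              + (1 / 4) * (∑ j : Fin d, (pdx j (fun y => Real.log (ρ y t)) x) ^ 2)
              - (∑ j : Fin d, (pdx j (fun y => S y t) x) ^ 2))
          + V x t)
    (hsys2 : ∀ (x : Fin d → ℝ) (t : ℝ),
      (ℏ / 2) * deriv (fun s => Real.log (ρ x s)) t
        = -(ℏ ^ 2 / (2 * m))
            * ((∑ j : Fin d, pdx j (fun y => pdx j (fun z => S z t) y) x)
              + (∑ j : Fin d,
                  pdx j (fun y => Real.log (ρ y t)) x * pdx j (fun y => S y t) x))) :
    ∀ (x : Fin d → ℝ) (t : ℝ) (i : Fin d),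
      (deriv (fun s => cvel ℏ m S x s i) t
          = -(1 / m) * pdx i (fun y => V y t) x
            + (∑ j : Fin d, ovel ℏ m ρ x t j * pdx j (fun y => ovel ℏ m ρ y t i) x)
            - (∑ j : Fin d, cvel ℏ m S x t j * pdx j (fun y => cvel ℏ m S y t i) x)
            + (ℏ / (2 * m))
                * pdx i (fun y => ∑ j : Fin d, pdx j (fun z => ovel ℏ m ρ z t j) y) x)
      ∧ (deriv (fun s => ovel ℏ m ρ x s i) t
          = -(pdx i (fun y => ∑ j : Fin d, cvel ℏ m S y t j * ovel ℏ m ρ y t j) x)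
            - (ℏ / (2 * m))
                * pdx i (fun y => ∑ j : Fin d, pdx j (fun z => cvel ℏ m S z t j) y) x) :=
  coupled_system_implies_stochastic_mechanics_general d ℏ m ρ S V hρ hρpos hS hV hsys1 hsys2
end
end

section
/- Suppose ψ := √ρ · e^{iS} satisfies the Schrödinger equation iħ ∂_t ψ(x,t) = −(ħ²/(2m)) Δψ(x,t) + V(x,t) ψ(x,t) at every (x,t) ∈ ℝ^d × ℝ. Then the current velocity v := (ħ/m) ∇S and the osmotic velocity u := (ħ/(2m)) ∇ log ρ satisfy, at every (x,t) ∈ ℝ^d × ℝ, the stochastic-mechanics system: ∂_t v = −(1/m) ∇V + ⟨u, ∇⟩u − ⟨v, ∇⟩v + (ħ/(2m)) ∇⟨∇, u⟩ and ∂_t u = −∇⟨v, u⟩ − (ħ/(2m)) ∇⟨∇, v⟩. -/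
noncomputable section

/-- The wave function `ψ = √ρ · e^{iS}`. -/
def psi {d : ℕ} (ρ S : (Fin d → ℝ) → ℝ → ℝ) (x : Fin d → ℝ) (t : ℝ) : ℂ :=
  (Real.sqrt (ρ x t) : ℂ) * Complex.exp (Complex.I * (S x t : ℂ))

/-- The time-dependent Schrödinger equation
`iℏ ∂ₜψ = −(ℏ²/(2m)) Δψ + V ψ` holding at every point `(x, t)`. -/
def SchrodingerEq {d : ℕ} (ℏ m : ℝ) (V : (Fin d → ℝ) → ℝ → ℝ)
    (ψ : (Fin d → ℝ) → ℝ → ℂ) : Prop :=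
  ∀ (x : Fin d → ℝ) (t : ℝ),
    Complex.I * (ℏ : ℂ) * deriv (fun s => ψ x s) t
      = -((ℏ : ℂ) ^ 2 / (2 * (m : ℂ)))
            * (∑ j : Fin d, pdx j (fun y => pdx j (fun z => ψ z t) y) x)
        + (V x t : ℂ) * ψ x t

/-!
Write `ψ = exp Φ` with `Φ = ½ log ρ + i S`, so that `W := (ħ/m) ∇Φ = u + i v`. Dividing the
Schrödinger equation by `ψ` gives the complex Hamilton–Jacobi equation `ħ ∂ₜΦ = i Q` with
`Q = (m/2) ⟨W, W⟩ + (ħ/2) ⟨∇, W⟩ − V`. Its gradient, together with `∂ⱼ Wᵢ = ∂ᵢ Wⱼ` (second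
derivatives commute), is `m ∂ₜW = i ∇Q = i (m ⟨W, ∇⟩W + (ħ/2) ∇⟨∇, W⟩ − ∇V)`, and the imaginary
and real parts of this complex Burgers equation are the equations for `v` and `u`.
-/

open Complex
open scoped ContDiff

theorem re_sum_mul {ι : Type*} (s : Finset ι) (z w : ι → ℂ) :
    (∑ j ∈ s, z j * w j).re = ∑ j ∈ s, (z j).re * (w j).re - ∑ j ∈ s, (z j).im * (w j).im := by
  simp [mul_re, Finset.sum_sub_distrib]

section DirDeriv

variable {E F G : Type*} [NormedAddCommGroup E] [NormedSpace ℝ E] [NormedAddCommGroup F]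
  [NormedSpace ℝ F] [NormedAddCommGroup G] [NormedSpace ℝ G]

def dirDeriv (w : E) (f : E → F) : E → F :=
  fun p => fderiv ℝ f p w

@[fun_prop]
theorem differentiableAt_of_contDiff_infty {f : E → F} (hf : ContDiff ℝ ∞ f) (p : E) :
    DifferentiableAt ℝ f p :=
  hf.differentiable (by simp) p

@[fun_prop]
theorem ContDiff.dirDeriv {f : E → F} (hf : ContDiff ℝ ∞ f) (w : E) :
    ContDiff ℝ ∞ (dirDeriv w f) :=
  (hf.fderiv_right (by simp)).clm_apply contDiff_const

theorem dirDeriv_dirDeriv {f : E → F} (hf : ContDiff ℝ ∞ f) (v w p : E) :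
    dirDeriv v (dirDeriv w f) p = fderiv ℝ (fderiv ℝ f) p v w := by
  have hf' : DifferentiableAt ℝ (fderiv ℝ f) p :=
    (hf.fderiv_right (m := ∞) (by simp)).differentiable (by simp) p
  unfold dirDeriv
  simp [fderiv_clm_apply hf' (differentiableAt_const w)]

theorem dirDeriv_comm {f : E → F} (hf : ContDiff ℝ ∞ f) (v w p : E) :
    dirDeriv v (dirDeriv w f) p = dirDeriv w (dirDeriv v f) p := by
  rw [dirDeriv_dirDeriv hf, dirDeriv_dirDeriv hf]
  exact hf.contDiffAt.isSymmSndFDerivAt (by simpa using ENat.LEInfty.out) v w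

variable {w p : E}

theorem dirDeriv_add {f g : E → F} (hf : DifferentiableAt ℝ f p) (hg : DifferentiableAt ℝ g p) :
    dirDeriv w (fun q => f q + g q) p = dirDeriv w f p + dirDeriv w g p := by
  simp [dirDeriv, fderiv_fun_add hf hg]

theorem dirDeriv_sub {f g : E → F} (hf : DifferentiableAt ℝ f p) (hg : DifferentiableAt ℝ g p) :
    dirDeriv w (fun q => f q - g q) p = dirDeriv w f p - dirDeriv w g p := by
  simp [dirDeriv, fderiv_fun_sub hf hg]

theorem dirDeriv_sum {ι : Type*} {s : Finset ι} {f : ι → E → F}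
    (hf : ∀ i ∈ s, DifferentiableAt ℝ (f i) p) :
    dirDeriv w (fun q => ∑ i ∈ s, f i q) p = ∑ i ∈ s, dirDeriv w (f i) p := by
  simp [dirDeriv, fderiv_fun_sum hf]

theorem dirDeriv_clm_comp (ℓ : F →L[ℝ] G) {f : E → F} (hf : DifferentiableAt ℝ f p) :
    dirDeriv w (fun q => ℓ (f q)) p = ℓ (dirDeriv w f p) := by
  simp [dirDeriv, fderiv_fun_comp p ℓ.differentiableAt hf]

section NormedAlgebra

variable {𝔸 : Type*} [NormedCommRing 𝔸] [NormedAlgebra ℝ 𝔸] {f g : E → 𝔸}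

theorem dirDeriv_mul (hf : DifferentiableAt ℝ f p) (hg : DifferentiableAt ℝ g p) :
    dirDeriv w (fun q => f q * g q) p = dirDeriv w f p * g p + f p * dirDeriv w g p := by
  simp only [dirDeriv, fderiv_fun_mul hf hg, add_apply,
    smul_apply, smul_eq_mul]
  ring

theorem dirDeriv_const_mul (hf : DifferentiableAt ℝ f p) (c : 𝔸) :
    dirDeriv w (fun q => c * f q) p = c * dirDeriv w f p := by
  simp [dirDeriv, fderiv_const_mul hf]

end NormedAlgebra

@[fun_prop]
theorem contDiff_ofReal {n : WithTop ℕ∞} : ContDiff ℝ n ((↑) : ℝ → ℂ) :=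
  ofRealCLM.contDiff

@[fun_prop]
theorem contDiff_re {n : WithTop ℕ∞} : ContDiff ℝ n re :=
  reCLM.contDiff

@[fun_prop]
theorem contDiff_im {n : WithTop ℕ∞} : ContDiff ℝ n im :=
  imCLM.contDiff

theorem dirDeriv_ofReal {f : E → ℝ} (hf : DifferentiableAt ℝ f p) :
    dirDeriv w (fun q => (f q : ℂ)) p = dirDeriv w f p := by
  simpa using dirDeriv_clm_comp ofRealCLM hf

theorem dirDeriv_re {f : E → ℂ} (hf : DifferentiableAt ℝ f p) :
    dirDeriv w (fun q => (f q).re) p = (dirDeriv w f p).re := by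
  simpa using dirDeriv_clm_comp reCLM hf

theorem dirDeriv_im {f : E → ℂ} (hf : DifferentiableAt ℝ f p) :
    dirDeriv w (fun q => (f q).im) p = (dirDeriv w f p).im := by
  simpa using dirDeriv_clm_comp imCLM hf

theorem dirDeriv_cexp {f : E → ℂ} (hf : DifferentiableAt ℝ f p) :
    dirDeriv w (fun q => exp (f q)) p = exp (f p) * dirDeriv w f p := by
  simp [dirDeriv, hf.hasFDerivAt.cexp.fderiv]

theorem dirDeriv_dirDeriv_cexp {f : E → ℂ} (hf : ContDiff ℝ ∞ f) :
    dirDeriv w (dirDeriv w fun q => exp (f q)) p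
      = exp (f p) * (dirDeriv w f p ^ 2 + dirDeriv w (dirDeriv w f) p) := by
  have hexp : dirDeriv w (fun q => exp (f q)) = fun q => exp (f q) * dirDeriv w f q :=
    funext fun q => dirDeriv_cexp (by fun_prop)
  rw [hexp, dirDeriv_mul (by fun_prop) (by fun_prop), dirDeriv_cexp (by fun_prop)]
  ring

end DirDeriv

section Slices

variable {d : ℕ} {X : Type*} [NormedAddCommGroup X] [NormedSpace ℝ X]
  {F : (Fin d → ℝ) × ℝ → X} {x : Fin d → ℝ} {t : ℝ}

def spaceDir (j : Fin d) : (Fin d → ℝ) × ℝ := (Pi.single j 1, 0)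

def timeDir : (Fin d → ℝ) × ℝ := (0, 1)

theorem pdx_slice (hF : DifferentiableAt ℝ F (x, t)) (j : Fin d) :
    pdx j (fun y => F (y, t)) x = dirDeriv (spaceDir j) F (x, t) := by
  have hslice : HasFDerivAt (fun y : Fin d → ℝ => (y, t)) ((ContinuousLinearMap.id ℝ _).prod 0) x :=
    (hasFDerivAt_id x).prodMk (hasFDerivAt_const t x)
  rw [pdx, show (fun y => F (y, t)) = F ∘ fun y => (y, t) from rfl,
    (hF.hasFDerivAt.comp x hslice).fderiv]
  simp [dirDeriv, spaceDir]

theorem deriv_slice (hF : DifferentiableAt ℝ F (x, t)) :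
    deriv (fun s => F (x, s)) t = dirDeriv timeDir F (x, t) :=
  (hF.hasFDerivAt.comp_hasDerivAt t ((hasDerivAt_const t x).prodMk (hasDerivAt_id t))).deriv

theorem pdx_re_slice {F : (Fin d → ℝ) × ℝ → ℂ} (hF : DifferentiableAt ℝ F (x, t)) (j : Fin d) :
    pdx j (fun y => (F (y, t)).re) x = (dirDeriv (spaceDir j) F (x, t)).re :=
  (pdx_slice (F := fun q => (F q).re) (by fun_prop) j).trans (dirDeriv_re hF)

theorem pdx_im_slice {F : (Fin d → ℝ) × ℝ → ℂ} (hF : DifferentiableAt ℝ F (x, t)) (j : Fin d) :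
    pdx j (fun y => (F (y, t)).im) x = (dirDeriv (spaceDir j) F (x, t)).im :=
  (pdx_slice (F := fun q => (F q).im) (by fun_prop) j).trans (dirDeriv_im hF)

theorem deriv_re_slice {F : (Fin d → ℝ) × ℝ → ℂ} (hF : DifferentiableAt ℝ F (x, t)) :
    deriv (fun s => (F (x, s)).re) t = (dirDeriv timeDir F (x, t)).re :=
  (deriv_slice (F := fun q => (F q).re) (by fun_prop)).trans (dirDeriv_re hF)

theorem deriv_im_slice {F : (Fin d → ℝ) × ℝ → ℂ} (hF : DifferentiableAt ℝ F (x, t)) :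
    deriv (fun s => (F (x, s)).im) t = (dirDeriv timeDir F (x, t)).im :=
  (deriv_slice (F := fun q => (F q).im) (by fun_prop)).trans (dirDeriv_im hF)

theorem pdx_pdx_cexp_slice {Φ : (Fin d → ℝ) × ℝ → ℂ} (hΦ : ContDiff ℝ ∞ Φ) (j : Fin d) :
    pdx j (fun y => pdx j (fun z => exp (Φ (z, t))) y) x
      = exp (Φ (x, t)) * (dirDeriv (spaceDir j) Φ (x, t) ^ 2
        + dirDeriv (spaceDir j) (dirDeriv (spaceDir j) Φ) (x, t)) := by
  have hinner : (fun y => pdx j (fun z => exp (Φ (z, t))) y)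
      = fun y => dirDeriv (spaceDir j) (fun q => exp (Φ q)) (y, t) :=
    funext fun y => pdx_slice (F := fun q => exp (Φ q)) (by fun_prop) j
  rw [hinner, pdx_slice (F := dirDeriv (spaceDir j) fun q => exp (Φ q)) (by fun_prop),
    dirDeriv_dirDeriv_cexp hΦ]

end Slices

section ComplexVelocity

variable {d : ℕ} (ℏ m : ℝ) (Φ : (Fin d → ℝ) × ℝ → ℂ) (V : (Fin d → ℝ) × ℝ → ℝ)

def complexVel (i : Fin d) : (Fin d → ℝ) × ℝ → ℂ :=
  fun p => ((ℏ / m : ℝ) : ℂ) * dirDeriv (spaceDir i) Φ p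

def complexVelDiv : (Fin d → ℝ) × ℝ → ℂ :=
  fun p => ∑ j, dirDeriv (spaceDir j) (complexVel ℏ m Φ j) p

def hamiltonJacobiRhs : (Fin d → ℝ) × ℝ → ℂ :=
  fun p => ((m / 2 : ℝ) : ℂ) * ∑ j, complexVel ℏ m Φ j p ^ 2
    + ((ℏ / 2 : ℝ) : ℂ) * complexVelDiv ℏ m Φ p - (V p : ℂ)

variable {ℏ m Φ V}

@[fun_prop]
theorem ContDiff.complexVel (hΦ : ContDiff ℝ ∞ Φ) (i : Fin d) :
    ContDiff ℝ ∞ (complexVel ℏ m Φ i) := by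
  unfold _root_.complexVel
  fun_prop

@[fun_prop]
theorem ContDiff.complexVelDiv (hΦ : ContDiff ℝ ∞ Φ) : ContDiff ℝ ∞ (complexVelDiv ℏ m Φ) := by
  unfold _root_.complexVelDiv
  fun_prop

theorem dirDeriv_complexVel_comm (hΦ : ContDiff ℝ ∞ Φ) (i j : Fin d) (p : (Fin d → ℝ) × ℝ) :
    dirDeriv (spaceDir j) (complexVel ℏ m Φ i) p
      = dirDeriv (spaceDir i) (complexVel ℏ m Φ j) p := by
  unfold complexVel
  rw [dirDeriv_const_mul (by fun_prop), dirDeriv_const_mul (by fun_prop), dirDeriv_comm hΦ]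

theorem dirDeriv_hamiltonJacobiRhs (hΦ : ContDiff ℝ ∞ Φ) (hV : ContDiff ℝ ∞ V) (i : Fin d)
    (p : (Fin d → ℝ) × ℝ) :
    dirDeriv (spaceDir i) (hamiltonJacobiRhs ℏ m Φ V) p
      = (m : ℂ) * ∑ j, complexVel ℏ m Φ j p * dirDeriv (spaceDir j) (complexVel ℏ m Φ i) p
        + ((ℏ / 2 : ℝ) : ℂ) * dirDeriv (spaceDir i) (complexVelDiv ℏ m Φ) p
        - ((dirDeriv (spaceDir i) V p : ℝ) : ℂ) := by
  unfold hamiltonJacobiRhs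
  simp only [sq]
  simp (disch := fun_prop) only [dirDeriv_sub, dirDeriv_add, dirDeriv_const_mul, dirDeriv_sum,
    dirDeriv_mul, dirDeriv_ofReal]
  simp only [dirDeriv_complexVel_comm hΦ i, Finset.mul_sum]
  push_cast
  congr 2
  refine Finset.sum_congr rfl fun j _ => ?_
  ring

@[fun_prop]
theorem ContDiff.hamiltonJacobiRhs (hΦ : ContDiff ℝ ∞ Φ) (hV : ContDiff ℝ ∞ V) :
    ContDiff ℝ ∞ (hamiltonJacobiRhs ℏ m Φ V) := by
  unfold _root_.hamiltonJacobiRhs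
  fun_prop

theorem dirDeriv_timeDir_complexVel (hm : m ≠ 0) (hΦ : ContDiff ℝ ∞ Φ) (hV : ContDiff ℝ ∞ V)
    (hHJ : ∀ p, (ℏ : ℂ) * dirDeriv timeDir Φ p = I * hamiltonJacobiRhs ℏ m Φ V p)
    (i : Fin d) (p : (Fin d → ℝ) × ℝ) :
    (m : ℂ) * dirDeriv timeDir (complexVel ℏ m Φ i) p
      = I * dirDeriv (spaceDir i) (hamiltonJacobiRhs ℏ m Φ V) p := by
  calc (m : ℂ) * dirDeriv timeDir (complexVel ℏ m Φ i) p
      = (ℏ : ℂ) * dirDeriv (spaceDir i) (dirDeriv timeDir Φ) p := by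
        unfold complexVel
        rw [dirDeriv_const_mul (by fun_prop), dirDeriv_comm hΦ, ← mul_assoc, ← ofReal_mul,
          mul_div_cancel₀ ℏ hm]
    _ = dirDeriv (spaceDir i) (fun q => (ℏ : ℂ) * dirDeriv timeDir Φ q) p :=
        (dirDeriv_const_mul (by fun_prop) _).symm
    _ = dirDeriv (spaceDir i) (fun q => I * hamiltonJacobiRhs ℏ m Φ V q) p := by
        simp only [hHJ]
    _ = I * dirDeriv (spaceDir i) (hamiltonJacobiRhs ℏ m Φ V) p :=
        dirDeriv_const_mul (by fun_prop) _

end ComplexVelocity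

section Madelung

variable {d : ℕ} {ℏ m : ℝ} {ρ S V : (Fin d → ℝ) → ℝ → ℝ}

-- Irreducible, so that `fun_prop` uses a smoothness hypothesis on `logPsi ρ S` instead of
-- unfolding it.
@[irreducible]
def logPsi (ρ S : (Fin d → ℝ) → ℝ → ℝ) (p : (Fin d → ℝ) × ℝ) : ℂ :=
  ((Real.log (Function.uncurry ρ p) / 2 : ℝ) : ℂ) + I * ((Function.uncurry S p : ℝ) : ℂ)

theorem re_logPsi (p : (Fin d → ℝ) × ℝ) :
    (logPsi ρ S p).re = Real.log (Function.uncurry ρ p) / 2 := by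
  simp [logPsi]

theorem im_logPsi (p : (Fin d → ℝ) × ℝ) : (logPsi ρ S p).im = Function.uncurry S p := by
  simp [logPsi]

theorem contDiff_logPsi (hρ : ContDiff ℝ ∞ (Function.uncurry ρ)) (hρpos : ∀ x t, 0 < ρ x t)
    (hS : ContDiff ℝ ∞ (Function.uncurry S)) : ContDiff ℝ ∞ (logPsi ρ S) := by
  have hlog : ContDiff ℝ ∞ fun p => Real.log (Function.uncurry ρ p) :=
    hρ.log fun p => (hρpos p.1 p.2).ne'
  unfold logPsi
  fun_prop

theorem psi_eq_exp_logPsi (hρpos : ∀ x t, 0 < ρ x t) (x : Fin d → ℝ) (t : ℝ) :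
    psi ρ S x t = exp (logPsi ρ S (x, t)) := by
  rw [logPsi, exp_add, psi, ← ofReal_exp, Function.uncurry_apply_pair,
    ← Real.log_sqrt (hρpos x t).le, Real.exp_log (Real.sqrt_pos.2 (hρpos x t))]
  rfl

theorem hamiltonJacobi_of_schrodinger (hm : m ≠ 0)
    (hρ : ContDiff ℝ ∞ (Function.uncurry ρ)) (hρpos : ∀ x t, 0 < ρ x t)
    (hS : ContDiff ℝ ∞ (Function.uncurry S)) (h : SchrodingerEq ℏ m V (psi ρ S))
    (p : (Fin d → ℝ) × ℝ) :
    (ℏ : ℂ) * dirDeriv timeDir (logPsi ρ S) p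
      = I * hamiltonJacobiRhs ℏ m (logPsi ρ S) (Function.uncurry V) p := by
  obtain ⟨x, t⟩ := p
  have hΦ := contDiff_logPsi hρ hρpos hS
  have hxt := h x t
  simp only [psi_eq_exp_logPsi hρpos] at hxt
  set Φ := logPsi ρ S
  rw [deriv_slice (F := fun q => exp (Φ q)) (by fun_prop), dirDeriv_cexp (by fun_prop)] at hxt
  simp only [pdx_pdx_cexp_slice hΦ, ← Finset.mul_sum] at hxt
  have hriccati : I * ℏ * dirDeriv timeDir Φ (x, t)
      = -((ℏ : ℂ) ^ 2 / (2 * m)) * ∑ j, (dirDeriv (spaceDir j) Φ (x, t) ^ 2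
        + dirDeriv (spaceDir j) (dirDeriv (spaceDir j) Φ) (x, t)) + V x t :=
    mul_left_cancel₀ (exp_ne_zero (Φ (x, t))) (by linear_combination hxt)
  unfold hamiltonJacobiRhs complexVelDiv complexVel
  simp (disch := fun_prop) only [dirDeriv_const_mul]
  simp only [mul_pow, ← Finset.mul_sum, Finset.sum_add_distrib,
    Function.uncurry_apply_pair] at hriccati ⊢
  have hm' : (m : ℂ) ≠ 0 := ofReal_ne_zero.2 hm
  have hc₁ : ((m / 2 : ℝ) : ℂ) * ((ℏ / m : ℝ) : ℂ) ^ 2 = (ℏ : ℂ) ^ 2 / (2 * m) := by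
    push_cast
    field_simp
  have hc₂ : ((ℏ / 2 : ℝ) : ℂ) * ((ℏ / m : ℝ) : ℂ) = (ℏ : ℂ) ^ 2 / (2 * m) := by
    push_cast
    field_simp
  linear_combination (-I) * hriccati + ℏ * dirDeriv timeDir Φ (x, t) * I_sq
    - I * (∑ j, dirDeriv (spaceDir j) Φ (x, t) ^ 2) * hc₁
    - I * (∑ j, dirDeriv (spaceDir j) (dirDeriv (spaceDir j) Φ) (x, t)) * hc₂

end Madelung

section Velocities

variable {d : ℕ} {ℏ m : ℝ} {ρ S : (Fin d → ℝ) → ℝ → ℝ}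

theorem ovel_eq_re (hΦ : ContDiff ℝ ∞ (logPsi ρ S)) (y : Fin d → ℝ) (s : ℝ) (j : Fin d) :
    ovel ℏ m ρ y s j = (complexVel ℏ m (logPsi ρ S) j (y, s)).re := by
  have hlog : (fun z => Real.log (ρ z s)) = fun z => 2 * (logPsi ρ S (z, s)).re := by
    funext z
    rw [re_logPsi, Function.uncurry_apply_pair]
    ring
  rw [ovel, hlog, pdx_slice (F := fun q => 2 * (logPsi ρ S q).re) (by fun_prop),
    dirDeriv_const_mul (by fun_prop), dirDeriv_re (by fun_prop), complexVel, re_ofReal_mul]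
  ring

theorem cvel_eq_im (hΦ : ContDiff ℝ ∞ (logPsi ρ S)) (y : Fin d → ℝ) (s : ℝ) (j : Fin d) :
    cvel ℏ m S y s j = (complexVel ℏ m (logPsi ρ S) j (y, s)).im := by
  have him : (fun z => S z s) = fun z => (logPsi ρ S (z, s)).im := by
    funext z
    rw [im_logPsi, Function.uncurry_apply_pair]
  rw [cvel, him, pdx_slice (F := fun q => (logPsi ρ S q).im) (by fun_prop),
    dirDeriv_im (by fun_prop), complexVel, im_ofReal_mul]

theorem pdx_div_re_complexVel {Φ : (Fin d → ℝ) × ℝ → ℂ} (hΦ : ContDiff ℝ ∞ Φ) (x : Fin d → ℝ)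
    (t : ℝ) (i : Fin d) :
    pdx i (fun y => ∑ j, pdx j (fun z => (complexVel ℏ m Φ j (z, t)).re) y) x
      = (dirDeriv (spaceDir i) (complexVelDiv ℏ m Φ) (x, t)).re := by
  have hdiv : (fun y => ∑ j, pdx j (fun z => (complexVel ℏ m Φ j (z, t)).re) y)
      = fun y => (complexVelDiv ℏ m Φ (y, t)).re :=
    funext fun y => by simp (disch := fun_prop) only [pdx_re_slice, complexVelDiv, re_sum]
  rw [hdiv, pdx_re_slice (by fun_prop)]

theorem pdx_div_im_complexVel {Φ : (Fin d → ℝ) × ℝ → ℂ} (hΦ : ContDiff ℝ ∞ Φ) (x : Fin d → ℝ)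
    (t : ℝ) (i : Fin d) :
    pdx i (fun y => ∑ j, pdx j (fun z => (complexVel ℏ m Φ j (z, t)).im) y) x
      = (dirDeriv (spaceDir i) (complexVelDiv ℏ m Φ) (x, t)).im := by
  have hdiv : (fun y => ∑ j, pdx j (fun z => (complexVel ℏ m Φ j (z, t)).im) y)
      = fun y => (complexVelDiv ℏ m Φ (y, t)).im :=
    funext fun y => by simp (disch := fun_prop) only [pdx_im_slice, complexVelDiv, im_sum]
  rw [hdiv, pdx_im_slice (by fun_prop)]

theorem pdx_sum_im_mul_re_complexVel {Φ : (Fin d → ℝ) × ℝ → ℂ} (hΦ : ContDiff ℝ ∞ Φ)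
    (x : Fin d → ℝ) (t : ℝ) (i : Fin d) :
    pdx i (fun y => ∑ j, (complexVel ℏ m Φ j (y, t)).im * (complexVel ℏ m Φ j (y, t)).re) x
      = (∑ j, complexVel ℏ m Φ j (x, t)
          * dirDeriv (spaceDir j) (complexVel ℏ m Φ i) (x, t)).im := by
  rw [pdx_slice (F := fun q => ∑ j, (complexVel ℏ m Φ j q).im * (complexVel ℏ m Φ j q).re)
    (by fun_prop)]
  simp (disch := fun_prop) only [dirDeriv_sum, dirDeriv_mul, dirDeriv_re, dirDeriv_im,
    dirDeriv_complexVel_comm hΦ i, im_sum, mul_im]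
  refine Finset.sum_congr rfl fun j _ => ?_
  ring

end Velocities

theorem schrodinger_implies_stochastic_mechanics_general
    (d : ℕ) (ℏ m : ℝ) (hm : 0 < m)
    (ρ S V : (Fin d → ℝ) → ℝ → ℝ)
    (hρ : ContDiff ℝ (⊤ : ℕ∞) (Function.uncurry ρ))
    (hρpos : ∀ x t, 0 < ρ x t)
    (hS : ContDiff ℝ (⊤ : ℕ∞) (Function.uncurry S))
    (hV : ContDiff ℝ (⊤ : ℕ∞) (Function.uncurry V))
    (hschrod : SchrodingerEq ℏ m V (psi ρ S)) :
    ∀ (x : Fin d → ℝ) (t : ℝ) (i : Fin d),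
      (deriv (fun s => cvel ℏ m S x s i) t
          = -(1 / m) * pdx i (fun y => V y t) x
            + (∑ j : Fin d, ovel ℏ m ρ x t j * pdx j (fun y => ovel ℏ m ρ y t i) x)
            - (∑ j : Fin d, cvel ℏ m S x t j * pdx j (fun y => cvel ℏ m S y t i) x)
            + (ℏ / (2 * m))
                * pdx i (fun y => ∑ j : Fin d, pdx j (fun z => ovel ℏ m ρ z t j) y) x)
      ∧ (deriv (fun s => ovel ℏ m ρ x s i) t
          = -(pdx i (fun y => ∑ j : Fin d, cvel ℏ m S y t j * ovel ℏ m ρ y t j) x)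
            - (ℏ / (2 * m))
                * pdx i (fun y => ∑ j : Fin d, pdx j (fun z => cvel ℏ m S z t j) y) x) := by
  intro x t i
  have hΦ := contDiff_logPsi hρ hρpos hS
  have hburgers := dirDeriv_timeDir_complexVel hm.ne' hΦ hV
    (hamiltonJacobi_of_schrodinger hm.ne' hρ hρpos hS hschrod) i (x, t)
  rw [dirDeriv_hamiltonJacobiRhs hΦ hV] at hburgers
  have hVx : pdx i (fun y => V y t) x = dirDeriv (spaceDir i) (Function.uncurry V) (x, t) :=
    pdx_slice (F := Function.uncurry V) (by fun_prop) i
  simp only [ovel_eq_re hΦ, cvel_eq_im hΦ]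
  rw [hVx, pdx_div_re_complexVel hΦ, pdx_div_im_complexVel hΦ, pdx_sum_im_mul_re_complexVel hΦ]
  simp (disch := fun_prop) only [deriv_re_slice, deriv_im_slice, pdx_re_slice, pdx_im_slice]
  have hm' : m ≠ 0 := hm.ne'
  constructor
  · have h := congrArg im hburgers
    simp only [im_ofReal_mul, I_mul_im, sub_re, add_re, re_ofReal_mul, re_sum_mul, ofReal_re] at h
    field_simp
    linear_combination 2 * h
  · have h := congrArg re hburgers
    simp only [re_ofReal_mul, I_mul_re, sub_im, add_im, im_ofReal_mul, ofReal_im] at h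
    field_simp
    linear_combination 2 * h

/-- If `ψ = √ρ · e^{iS}` satisfies the Schrödinger equation at every
point, then the current velocity `v = (ℏ/m) ∇S` and the osmotic velocity
`u = (ℏ/(2m)) ∇ log ρ` satisfy the stochastic-mechanics system
`∂ₜv = −(1/m)∇V + ⟨u,∇⟩u − ⟨v,∇⟩v + (ℏ/(2m))∇⟨∇,u⟩` and
`∂ₜu = −∇⟨v,u⟩ − (ℏ/(2m))∇⟨∇,v⟩`. -/
theorem schrodinger_implies_stochastic_mechanics
    (d : ℕ) (hd : 1 ≤ d) (ℏ m : ℝ) (hℏ : 0 < ℏ) (hm : 0 < m)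
    (ρ S V : (Fin d → ℝ) → ℝ → ℝ)
    (hρ : ContDiff ℝ (⊤ : ℕ∞) (Function.uncurry ρ))
    (hρpos : ∀ x t, 0 < ρ x t)
    (hS : ContDiff ℝ (⊤ : ℕ∞) (Function.uncurry S))
    (hV : ContDiff ℝ (⊤ : ℕ∞) (Function.uncurry V))
    (hschrod : SchrodingerEq ℏ m V (psi ρ S)) :
    ∀ (x : Fin d → ℝ) (t : ℝ) (i : Fin d),
      (deriv (fun s => cvel ℏ m S x s i) t
          = -(1 / m) * pdx i (fun y => V y t) x
            + (∑ j : Fin d, ovel ℏ m ρ x t j * pdx j (fun y => ovel ℏ m ρ y t i) x)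
            - (∑ j : Fin d, cvel ℏ m S x t j * pdx j (fun y => cvel ℏ m S y t i) x)
            + (ℏ / (2 * m))
                * pdx i (fun y => ∑ j : Fin d, pdx j (fun z => ovel ℏ m ρ z t j) y) x)
      ∧ (deriv (fun s => ovel ℏ m ρ x s i) t
          = -(pdx i (fun y => ∑ j : Fin d, cvel ℏ m S y t j * ovel ℏ m ρ y t j) x)
            - (ℏ / (2 * m))
                * pdx i (fun y => ∑ j : Fin d, pdx j (fun z => cvel ℏ m S z t j) y) x) :=
  schrodinger_implies_stochastic_mechanics_general d ℏ m hm ρ S V hρ hρpos hS hV hschrod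
end
end

section
/- Let p : ℝ^d × ℝ → ℝ be smooth (C^∞) with p > 0 everywhere, let b : ℝ^d × ℝ → ℝ^d be smooth, and let κ ≥ 0 be a real constant. Suppose p solves the forward Kolmogorov (Fokker–Planck) equation ∂_t p = −⟨∇, b p⟩ + κ Δp at every (x,t). Define the backward drift b* := b − 2κ ∇ log p. Then at every (x,t): (i) p also solves the backward Kolmogorov equation ∂_t p = −⟨∇, b* p⟩ − κ Δp, and (ii) consequently p solves the continuity equation ∂_t p = −⟨∇, ṽ p⟩ with probability current ṽ := (b + b*)/2. -/
/-! Since `(∂ⱼ log p) p = ∂ⱼ p`, the flux `(bⱼ − c ∂ⱼ log p) p` equals `bⱼ p − c ∂ⱼ p`, whose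
divergence is `⟨∇, b p⟩ − c Δp`. With `c = 2κ` (the backward drift `b*`) this turns `+κΔp` in the
forward equation into `−κΔp`; with `c = κ` (the current `ṽ = (b + b*)/2`) it absorbs the
diffusion term altogether. -/

noncomputable section

section LogCorrectedFlux

open Real

variable {d : ℕ}

theorem pdx_log_mul_self {f : (Fin d → ℝ) → ℝ} {y : Fin d → ℝ} (j : Fin d)
    (hf : DifferentiableAt ℝ f y) (hy : f y ≠ 0) :
    pdx j (fun z => log (f z)) y * f y = pdx j f y := by
  rw [pdx, fderiv.log hf hy, FunLike.coe_smul, Pi.smul_apply, smul_eq_mul, pdx]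
  field_simp

theorem pdx_log_corrected_flux {f β : (Fin d → ℝ) → ℝ} {x : Fin d → ℝ}
    (hf : ContDiff ℝ 2 f) (hf₀ : ∀ y, f y ≠ 0) (hβ : DifferentiableAt ℝ β x) (c : ℝ)
    (j : Fin d) :
    pdx j (fun y => (β y - c * pdx j (fun z => log (f z)) y) * f y) x
      = pdx j (fun y => β y * f y) x - c * pdx j (pdx j f) x := by
  have hf₁ : Differentiable ℝ f := hf.differentiable (by norm_num)
  have hflux : (fun y => (β y - c * pdx j (fun z => log (f z)) y) * f y)
      = fun y => β y * f y - c * pdx j f y := by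
    funext y
    rw [sub_mul, mul_assoc, pdx_log_mul_self j (hf₁ y) (hf₀ y)]
  have hpdx : Differentiable ℝ (pdx j f) :=
    ((hf.fderiv_right (m := 1) le_rfl).clm_apply contDiff_const).differentiable one_ne_zero
  rw [hflux, pdx, fderiv_fun_sub (hβ.fun_mul (hf₁ x)) ((hpdx x).const_mul c),
    fderiv_const_mul (hpdx x) c]
  rfl

theorem sum_pdx_log_corrected_flux {f : (Fin d → ℝ) → ℝ} {β : Fin d → (Fin d → ℝ) → ℝ}
    {x : Fin d → ℝ} (hf : ContDiff ℝ 2 f) (hf₀ : ∀ y, f y ≠ 0)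
    (hβ : ∀ j, DifferentiableAt ℝ (β j) x) (c : ℝ) :
    ∑ j, pdx j (fun y => (β j y - c * pdx j (fun z => log (f z)) y) * f y) x
      = ∑ j, pdx j (fun y => β j y * f y) x - c * ∑ j, pdx j (fun y => pdx j f y) x := by
  simp only [pdx_log_corrected_flux hf hf₀ (hβ _), Finset.sum_sub_distrib, Finset.mul_sum]

end LogCorrectedFlux

theorem forward_kolmogorov_implies_backward_and_continuity_general
    (d : ℕ) (κ : ℝ)
    (p : (Fin d → ℝ) → ℝ → ℝ)
    (b : (Fin d → ℝ) → ℝ → (Fin d → ℝ))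
    (hp : ContDiff ℝ (⊤ : ℕ∞) (Function.uncurry p))
    (hppos : ∀ x t, 0 < p x t)
    (hb : ContDiff ℝ (⊤ : ℕ∞) (Function.uncurry b))
    (hfwd : ∀ (x : Fin d → ℝ) (t : ℝ),
      deriv (fun s => p x s) t
        = -(∑ j : Fin d, pdx j (fun y => b y t j * p y t) x)
          + κ * (∑ j : Fin d, pdx j (fun y => pdx j (fun z => p z t) y) x)) :
    ∀ (x : Fin d → ℝ) (t : ℝ),
      (deriv (fun s => p x s) t
          = -(∑ j : Fin d, pdx j
                (fun y => (b y t j - 2 * κ * pdx j (fun z => Real.log (p z t)) y) * p y t) x)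
            - κ * (∑ j : Fin d, pdx j (fun y => pdx j (fun z => p z t) y) x))
      ∧ (deriv (fun s => p x s) t
          = -(∑ j : Fin d, pdx j
                (fun y =>
                  ((b y t j + (b y t j - 2 * κ * pdx j (fun z => Real.log (p z t)) y)) / 2)
                    * p y t) x)) := by
  intro x t
  have hpt : ContDiff ℝ 2 (fun y => p y t) :=
    (hp.comp (contDiff_prodMk_left t)).of_le (WithTop.coe_le_coe.mpr le_top)
  have hbt : ∀ j, DifferentiableAt ℝ (fun y => b y t j) x := fun j =>
    ((contDiff_pi.mp (hb.comp (contDiff_prodMk_left t)) j).differentiable (by simp)) x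
  have hflux := sum_pdx_log_corrected_flux hpt (fun y => (hppos y t).ne') hbt
  have hcurrent : ∀ β l : ℝ, (β + (β - 2 * κ * l)) / 2 = β - κ * l := fun β l => by ring
  simp only [hcurrent]
  rw [hflux, hflux, hfwd]
  constructor <;> ring

/-- If a smooth positive density `p` solves the forward Kolmogorov
(Fokker–Planck) equation `∂ₜp = −⟨∇, b p⟩ + κ Δp` with smooth drift `b` and constant
`κ ≥ 0`, then with backward drift `b* = b − 2κ ∇ log p`:
(i) `p` solves the backward Kolmogorov equation `∂ₜp = −⟨∇, b* p⟩ − κ Δp`, and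
(ii) `p` solves the continuity equation `∂ₜp = −⟨∇, ṽ p⟩` with `ṽ = (b + b*)/2`. -/
theorem forward_kolmogorov_implies_backward_and_continuity
    (d : ℕ) (hd : 1 ≤ d) (κ : ℝ) (hκ : 0 ≤ κ)
    (p : (Fin d → ℝ) → ℝ → ℝ)
    (b : (Fin d → ℝ) → ℝ → (Fin d → ℝ))
    (hp : ContDiff ℝ (⊤ : ℕ∞) (Function.uncurry p))
    (hppos : ∀ x t, 0 < p x t)
    (hb : ContDiff ℝ (⊤ : ℕ∞) (Function.uncurry b))
    (hfwd : ∀ (x : Fin d → ℝ) (t : ℝ),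
      deriv (fun s => p x s) t
        = -(∑ j : Fin d, pdx j (fun y => b y t j * p y t) x)
          + κ * (∑ j : Fin d, pdx j (fun y => pdx j (fun z => p z t) y) x)) :
    ∀ (x : Fin d → ℝ) (t : ℝ),
      (deriv (fun s => p x s) t
          = -(∑ j : Fin d, pdx j
                (fun y => (b y t j - 2 * κ * pdx j (fun z => Real.log (p z t)) y) * p y t) x)
            - κ * (∑ j : Fin d, pdx j (fun y => pdx j (fun z => p z t) y) x))
      ∧ (deriv (fun s => p x s) t
          = -(∑ j : Fin d, pdx j
                (fun y =>
                  ((b y t j + (b y t j - 2 * κ * pdx j (fun z => Real.log (p z t)) y)) / 2)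
                    * p y t) x)) :=
  forward_kolmogorov_implies_backward_and_continuity_general d κ p b hp hppos hb hfwd
end
end
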